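/- For any feasible allocation τ with τᵢ > 0 and Σᵢ τᵢ ≤ 1, the sum-throughput satisfies Σᵢ τᵢ log₂(1 + γᵢ/τᵢ) ≤ log₂(1 + Σᵢ γᵢ), with equality if and only if τᵢ = γᵢ/(Σⱼ γⱼ) for all i. -/

import Mathlib

/-!
Concavity of `log` gives, for each user, the tangent bound
`τᵢ log(1 + γᵢ/τᵢ) ≤ τᵢ log(1 + S) + (γᵢ - τᵢ S)/(1 + S)` with `S = Σⱼ γⱼ`, tight exactly when
`γᵢ = τᵢ S`. Summing, the right-hand sides add up to `log(1 + S) - (1 - Σ τ)(log(1 + S) - S/(1 + S))`,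
and the correction term is nonnegative because `S/(1 + S) ≤ log(1 + S)`; it vanishes once
`γᵢ = τᵢ S` for all `i`, since then `S = (Σ τ) S`.
-/

open Real Finset

namespace Real

theorem log_le_log_add_sub_div {x y : ℝ} (hx : 0 < x) (hy : 0 < y) :
    log y ≤ log x + (y - x) / x := by
  have h := log_le_sub_one_of_pos (div_pos hy hx)
  rw [log_div hy.ne' hx.ne'] at h
  rw [sub_div, div_self hx.ne']
  linarith

theorem log_eq_log_add_sub_div_iff {x y : ℝ} (hx : 0 < x) (hy : 0 < y) :
    log y = log x + (y - x) / x ↔ y = x := by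
  refine ⟨fun h => ?_, fun h => by simp [h]⟩
  by_contra hne
  have hlt := log_lt_sub_one_of_pos (div_pos hy hx) (by rwa [Ne, div_eq_one_iff_eq hx.ne'])
  rw [log_div hy.ne' hx.ne'] at hlt
  rw [sub_div, div_self hx.ne'] at h
  linarith

theorem div_one_add_le_log_one_add {S : ℝ} (hS : 0 ≤ S) : S / (1 + S) ≤ log (1 + S) := by
  have h := one_sub_inv_le_log_of_pos (by linarith : (0 : ℝ) < 1 + S)
  have h' : S / (1 + S) = 1 - (1 + S)⁻¹ := by
    field_simp
    ring
  linarith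

end Real

section Tangent

variable {t g S : ℝ}

lemma mul_log_one_add_div_le (ht : 0 < t) (hg : 0 < 1 + g / t) (hS : 0 < 1 + S) :
    t * log (1 + g / t) ≤ t * log (1 + S) + (g - t * S) / (1 + S) := by
  have h := mul_le_mul_of_nonneg_left (log_le_log_add_sub_div hS hg) ht.le
  have hlin : t * ((1 + g / t - (1 + S)) / (1 + S)) = (g - t * S) / (1 + S) := by
    field_simp
    ring
  linarith

lemma mul_log_one_add_div_eq_iff (ht : 0 < t) (hg : 0 < 1 + g / t) (hS : 0 < 1 + S) :
    t * log (1 + g / t) = t * log (1 + S) + (g - t * S) / (1 + S) ↔ g = t * S := by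
  have hlin : t * log (1 + S) + (g - t * S) / (1 + S)
      = t * (log (1 + S) + (1 + g / t - (1 + S)) / (1 + S)) := by
    field_simp
    ring
  rw [hlin, mul_right_inj' ht.ne', log_eq_log_add_sub_div_iff hS hg, add_right_inj,
    div_eq_iff ht.ne', mul_comm]

end Tangent

section SumThroughput

variable {ι : Type*} (s : Finset ι) (γ τ : ι → ℝ)

lemma sum_tangent_bound_eq :
    ∑ i ∈ s, (τ i * log (1 + ∑ j ∈ s, γ j) + (γ i - τ i * ∑ j ∈ s, γ j) / (1 + ∑ j ∈ s, γ j))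
      = log (1 + ∑ j ∈ s, γ j) - (1 - ∑ i ∈ s, τ i) *
          (log (1 + ∑ j ∈ s, γ j) - (∑ j ∈ s, γ j) / (1 + ∑ j ∈ s, γ j)) := by
  rw [sum_add_distrib, ← sum_mul, ← sum_div, sum_sub_distrib, ← sum_mul]
  ring

variable {s γ τ}

theorem sum_mul_log_one_add_div_le_and_eq_iff (hγ : ∀ i ∈ s, 0 ≤ γ i) (hτ : ∀ i ∈ s, 0 < τ i)
    (hsum : ∑ i ∈ s, τ i ≤ 1) :
    (∑ i ∈ s, τ i * log (1 + γ i / τ i) ≤ log (1 + ∑ i ∈ s, γ i)) ∧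
      (∑ i ∈ s, τ i * log (1 + γ i / τ i) = log (1 + ∑ i ∈ s, γ i) ↔
        ∀ i ∈ s, γ i = τ i * ∑ j ∈ s, γ j) := by
  set S := ∑ j ∈ s, γ j
  have hS : 0 ≤ S := sum_nonneg hγ
  have hS1 : 0 < 1 + S := by linarith
  have hpos : ∀ i ∈ s, 0 < 1 + γ i / τ i := fun i hi =>
    add_pos_of_pos_of_nonneg one_pos (div_nonneg (hγ i hi) (hτ i hi).le)
  have hterm : ∀ i ∈ s, τ i * log (1 + γ i / τ i) ≤ τ i * log (1 + S) + (γ i - τ i * S) / (1 + S) :=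
    fun i hi => mul_log_one_add_div_le (hτ i hi) (hpos i hi) hS1
  have hgap : 0 ≤ (1 - ∑ i ∈ s, τ i) * (log (1 + S) - S / (1 + S)) :=
    mul_nonneg (by linarith) (sub_nonneg.mpr (div_one_add_le_log_one_add hS))
  have hle := sum_le_sum hterm
  rw [sum_tangent_bound_eq] at hle
  refine ⟨by linarith, fun heq => fun i hi => ?_, fun h => ?_⟩
  · have htight : ∑ i ∈ s, τ i * log (1 + γ i / τ i)
        = ∑ i ∈ s, (τ i * log (1 + S) + (γ i - τ i * S) / (1 + S)) := by
      rw [sum_tangent_bound_eq]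
      linarith
    exact (mul_log_one_add_div_eq_iff (hτ i hi) (hpos i hi) hS1).mp
      ((sum_eq_sum_iff_of_le hterm).mp htight i hi)
  · have hST : S * (1 - ∑ i ∈ s, τ i) = 0 := by
      have hS_eq : S = (∑ i ∈ s, τ i) * S := by
        rw [sum_mul]
        exact sum_congr rfl h
      linarith
    have hgap0 : (1 - ∑ i ∈ s, τ i) * (log (1 + S) - S / (1 + S)) = 0 := by
      rcases mul_eq_zero.mp hST with hS0 | hT
      · simp [hS0]
      · simp [hT]
    rw [sum_congr rfl fun i hi =>
      (mul_log_one_add_div_eq_iff (hτ i hi) (hpos i hi) hS1).mpr (h i hi), sum_tangent_bound_eq, hgap0,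
      sub_zero]

end SumThroughput

/-- For any feasible τ (τᵢ > 0, Σᵢ τᵢ ≤ 1),
Σᵢ τᵢ log₂(1 + γᵢ/τᵢ) ≤ log₂(1 + Σᵢ γᵢ), with equality iff
τᵢ = γᵢ/(Σⱼ γⱼ) for all i. -/
theorem stmt_7 (K : ℕ) (γ : Fin K → ℝ) (hγ : ∀ i, 0 < γ i)
    (τ : Fin K → ℝ) (hτ : ∀ i, 0 < τ i) (hsum : ∑ i, τ i ≤ 1) :
    (∑ i, τ i * Real.logb 2 (1 + γ i / τ i) ≤ Real.logb 2 (1 + ∑ i, γ i)) ∧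
      (∑ i, τ i * Real.logb 2 (1 + γ i / τ i) = Real.logb 2 (1 + ∑ i, γ i) ↔
        ∀ i, τ i = γ i / ∑ j, γ j) := by
  obtain ⟨hle, heq⟩ := sum_mul_log_one_add_div_le_and_eq_iff (s := univ)
    (fun i _ => (hγ i).le) (fun i _ => hτ i) hsum
  have hlog2 : 0 < log 2 := log_pos one_lt_two
  have hlogb : ∑ i, τ i * logb 2 (1 + γ i / τ i) = (∑ i, τ i * log (1 + γ i / τ i)) / log 2 := by
    simp only [logb, sum_div, mul_div_assoc]
  rw [hlogb, logb, div_le_div_iff_of_pos_right hlog2, div_left_inj' hlog2.ne', heq]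
  refine ⟨hle, forall_congr' fun i => ?_⟩
  have hS : 0 < ∑ j, γ j := (hγ i).trans_le (single_le_sum (fun j _ => (hγ j).le) (mem_univ i))
  rw [eq_div_iff hS.ne', eq_comm]
  simp only [mem_univ, forall_true_left]
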